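/- arXiv:1309.5309 — 2 statements merged into one kernel-verified Lean document; each statement's English description precedes it below -/
import Mathlib

section
/- The Ihara composition F ∘ G := G(e0, F e1 F^{-1})·F on invertible formal power series in R⟨⟨e0,e1⟩⟩ with constant term 1 is associative: (F ∘ G) ∘ H = F ∘ (G ∘ H). -/
/-!
Noncommutative formal power series `R⟨⟨e0,e1⟩⟩` are modeled as coefficient
functions on words: `List (Fin 2) → R` (letter `0` is `e0`, letter `1` is
`e1`).  `cmul` is the Cauchy (concatenation) product, `oneS` the unit series.
-/

variable (R : Type*) [CommRing R] [Algebra ℚ R]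

/-- Cauchy product of noncommutative power series. -/
noncomputable def cmul (F G : List (Fin 2) → R) : List (Fin 2) → R :=
  fun w => ∑ i ∈ Finset.range (w.length + 1), F (w.take i) * G (w.drop i)

/-- The unit series `1`. -/
def oneS : List (Fin 2) → R := fun w => if w = [] then 1 else 0

/-- The series consisting of the single monomial `u`. -/
def wordS (u : List (Fin 2)) : List (Fin 2) → R := fun w => if w = u then 1 else 0

/-- Image of the monomial `u` under the substitution `e0 ↦ e0`, `e1 ↦ X`. -/
noncomputable def monImg (X : List (Fin 2) → R) : List (Fin 2) → (List (Fin 2) → R)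
  | [] => oneS R
  | a :: u => cmul R (if a = 1 then X else wordS R [0]) (monImg X u)

/-- The finset of words of length ≤ n over the alphabet {e0,e1}. -/
noncomputable def wordsLe (n : ℕ) : Finset (List (Fin 2)) :=
  (Finset.range (n + 1)).biUnion fun k =>
    (Finset.univ : Finset (Fin k → Fin 2)).image List.ofFn

/-- Substitution `G(e0, X)` of a series `X` for `e1` in `G` (the coefficient
of a word `w` only involves monomials of `G` of length ≤ |w|, since `X` is
substituted only in positions where it contributes at least one letter when
`X` has no constant term, as is the case for `F e1 F⁻¹`). -/
noncomputable def subst (G X : List (Fin 2) → R) : List (Fin 2) → R :=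
  fun w => ∑ u ∈ wordsLe w.length, G u * monImg R X u w

/-- `F e1 F⁻¹`, where `Fi` is the inverse of `F`. -/
noncomputable def conjE1 (F Fi : List (Fin 2) → R) : List (Fin 2) → R :=
  cmul R (cmul R F (wordS R [1])) Fi

/-- The Ihara composition `F ∘ G = G(e0, F e1 F⁻¹) · F`, where `Fi = F⁻¹`. -/
noncomputable def ihara (F Fi G : List (Fin 2) → R) : List (Fin 2) → R :=
  cmul R (subst R G (conjE1 R F Fi)) F

/-!
For `X` without constant term, `G ↦ G(e0, X)` is a ring endomorphism fixing `e0` and sending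
`e1` to `X`, and substitutions compose: `G(e0, Y)(e0, X) = G(e0, Y(e0, X))`.
With `X = F e1 F⁻¹` and `Y = G e1 G⁻¹`, the inverse of `K = F ∘ G = G(e0, X) F` is therefore
`F⁻¹ G⁻¹(e0, X)`, so `K e1 K⁻¹ = G(e0, X) X G⁻¹(e0, X) = Y(e0, X)`, and both sides of the
identity equal `H(e0, Y(e0, X)) G(e0, X) F`.
-/

section

variable {R : Type*} [CommRing R]

lemma cmul_nil (A B : List (Fin 2) → R) : cmul R A B [] = A [] * B [] := by
  simp [cmul]

lemma cmul_cons (A B : List (Fin 2) → R) (a : Fin 2) (w : List (Fin 2)) :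
    cmul R A B (a :: w) = A [] * B (a :: w) + cmul R (fun u => A (a :: u)) B w := by
  rw [cmul, cmul, List.length_cons, Finset.sum_range_succ']
  simp [add_comm]

lemma oneS_cmul (A : List (Fin 2) → R) : cmul R (oneS R) A = A := by
  funext w
  rw [cmul, Finset.sum_eq_single 0]
  · simp [oneS]
  · intro i hi hi0
    have : w.take i ≠ [] := by
      cases w <;> simp_all [List.take_eq_nil_iff]
    simp [oneS, this]
  · simp

lemma cmul_oneS (A : List (Fin 2) → R) : cmul R A (oneS R) = A := by
  funext w
  rw [cmul, Finset.sum_eq_single w.length]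
  · simp [oneS]
  · intro i hi hiw
    have : w.drop i ≠ [] := by
      simp only [Finset.mem_range] at hi
      simp [List.drop_eq_nil_iff]
      omega
    simp [oneS, this]
  · simp

lemma cmul_const_mul_add_left (B D C : List (Fin 2) → R) (x : R) (w : List (Fin 2)) :
    cmul R (fun u => x * B u + D u) C w = x * cmul R B C w + cmul R D C w := by
  simp only [cmul, Finset.mul_sum, ← Finset.sum_add_distrib]
  exact Finset.sum_congr rfl fun i _ => by ring

lemma cmul_assoc (A B C : List (Fin 2) → R) :
    cmul R (cmul R A B) C = cmul R A (cmul R B C) := by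
  funext w
  induction w generalizing A with
  | nil => simp [cmul_nil, mul_assoc]
  | cons a w ih =>
    have hAB : (fun u => cmul R A B (a :: u)) =
        fun u => A [] * B (a :: u) + cmul R (fun v => A (a :: v)) B u := by
      funext u
      rw [cmul_cons]
    rw [cmul_cons, cmul_cons, cmul_nil, cmul_cons, hAB, cmul_const_mul_add_left, ih]
    ring

lemma cmul_left_inv_eq_right_inv {A B C : List (Fin 2) → R}
    (hBA : cmul R B A = oneS R) (hAC : cmul R A C = oneS R) : B = C := by
  rw [← cmul_oneS B, ← hAC, ← cmul_assoc, hBA, oneS_cmul]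

lemma mem_wordsLe {u : List (Fin 2)} {n : ℕ} : u ∈ wordsLe n ↔ u.length ≤ n := by
  simp only [wordsLe, Finset.mem_biUnion, Finset.mem_range, Finset.mem_image,
    Finset.mem_univ, true_and]
  constructor
  · rintro ⟨k, hk, f, rfl⟩
    simp only [List.length_ofFn]
    omega
  · intro h
    exact ⟨u.length, by omega, u.get, List.ofFn_get u⟩

lemma sum_wordsLe_take_drop {M : Type*} [AddCommMonoid M] (n : ℕ)
    (f : List (Fin 2) → List (Fin 2) → M) :
    ∑ u ∈ wordsLe n, ∑ i ∈ Finset.range (u.length + 1), f (u.take i) (u.drop i) =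
      ∑ p ∈ (wordsLe n ×ˢ wordsLe n).filter (fun p => p.1.length + p.2.length ≤ n),
        f p.1 p.2 := by
  rw [Finset.sum_sigma']
  apply Finset.sum_nbij' (fun q => (q.1.take q.2, q.1.drop q.2))
    (fun p => ⟨p.1 ++ p.2, p.1.length⟩)
  · rintro ⟨u, i⟩ hq
    simp only [Finset.mem_sigma, Finset.mem_range, mem_wordsLe] at hq
    simp only [Finset.mem_filter, Finset.mem_product, mem_wordsLe,
      List.length_take, List.length_drop]
    omega
  · rintro ⟨u, v⟩ hp
    simp only [Finset.mem_filter, Finset.mem_product, mem_wordsLe] at hp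
    simp only [Finset.mem_sigma, Finset.mem_range, mem_wordsLe,
      List.length_append]
    omega
  · rintro ⟨u, i⟩ hq
    have hi : i ≤ u.length := Nat.lt_succ_iff.mp (Finset.mem_range.mp (Finset.mem_sigma.mp hq).2)
    exact Sigma.ext (List.take_append_drop i u) (heq_of_eq (List.length_take_of_le hi))
  · rintro ⟨u, v⟩ _
    exact Prod.ext List.take_left List.drop_left
  · intro q _
    rfl

lemma monImg_singleton (X : List (Fin 2) → R) (a : Fin 2) :
    monImg R X [a] = if a = 1 then X else wordS R [0] := by
  rw [monImg, monImg, cmul_oneS]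

lemma monImg_append (X : List (Fin 2) → R) (u v : List (Fin 2)) :
    monImg R X (u ++ v) = cmul R (monImg R X u) (monImg R X v) := by
  induction u with
  | nil => rw [List.nil_append, monImg, oneS_cmul]
  | cons a u ih => rw [List.cons_append, monImg, monImg, ih, cmul_assoc]

section NoConstantTerm

variable {X : List (Fin 2) → R} (hX : X [] = 0)
include hX

lemma monImg_apply_eq_zero_of_length_lt {u w : List (Fin 2)} (h : w.length < u.length) :
    monImg R X u w = 0 := by
  induction u generalizing w with
  | nil => simp at h
  | cons a u ih =>
    rw [monImg, cmul]
    refine Finset.sum_eq_zero fun i hi => ?_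
    rcases Nat.eq_zero_or_pos i with rfl | hi0
    · have : (if a = 1 then X else wordS R [0]) [] = 0 := by
        split <;> simp [wordS, hX]
      rw [List.take_zero, this, zero_mul]
    · rw [ih (w := w.drop i) (by simp at h hi ⊢; omega), mul_zero]

lemma subst_apply_eq_sum_wordsLe (G : List (Fin 2) → R) {w : List (Fin 2)} {n : ℕ}
    (hn : w.length ≤ n) : subst R G X w = ∑ u ∈ wordsLe n, G u * monImg R X u w := by
  refine Finset.sum_subset (fun u hu => ?_) fun u _ hu => ?_
  · rw [mem_wordsLe] at hu ⊢
    omega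
  · rw [mem_wordsLe] at hu
    rw [monImg_apply_eq_zero_of_length_lt hX (by omega), mul_zero]

lemma subst_wordS (u : List (Fin 2)) : subst R (wordS R u) X = monImg R X u := by
  funext w
  simp only [subst, wordS, ite_mul, one_mul, zero_mul, Finset.sum_ite_eq', mem_wordsLe]
  split_ifs with h
  · rfl
  · exact (monImg_apply_eq_zero_of_length_lt hX (not_le.mp h)).symm

lemma cmul_subst_subst_apply (A B : List (Fin 2) → R) (w : List (Fin 2)) :
    cmul R (subst R A X) (subst R B X) w =
      ∑ p ∈ wordsLe w.length ×ˢ wordsLe w.length, A p.1 * B p.2 * monImg R X (p.1 ++ p.2) w := by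
  have hsplit : ∀ i ∈ Finset.range (w.length + 1),
      subst R A X (w.take i) * subst R B X (w.drop i) =
        ∑ p ∈ wordsLe w.length ×ˢ wordsLe w.length,
          A p.1 * B p.2 * (monImg R X p.1 (w.take i) * monImg R X p.2 (w.drop i)) := by
    intro i _
    rw [subst_apply_eq_sum_wordsLe hX A (n := w.length) (by simp),
      subst_apply_eq_sum_wordsLe hX B (n := w.length) (by simp),
      Finset.sum_mul_sum, ← Finset.sum_product']
    exact Finset.sum_congr rfl fun p _ => by ring
  rw [cmul, Finset.sum_congr rfl hsplit, Finset.sum_comm]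
  refine Finset.sum_congr rfl fun p _ => ?_
  rw [← Finset.mul_sum, monImg_append]
  rfl

lemma subst_cmul (A B : List (Fin 2) → R) :
    subst R (cmul R A B) X = cmul R (subst R A X) (subst R B X) := by
  funext w
  set n := w.length
  calc subst R (cmul R A B) X w
      = ∑ u ∈ wordsLe n, ∑ i ∈ Finset.range (u.length + 1),
          A (u.take i) * B (u.drop i) * monImg R X (u.take i ++ u.drop i) w := by
        simp only [List.take_append_drop, ← Finset.sum_mul]
        rfl
    _ = ∑ p ∈ (wordsLe n ×ˢ wordsLe n).filter (fun p => p.1.length + p.2.length ≤ n),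
          A p.1 * B p.2 * monImg R X (p.1 ++ p.2) w :=
        sum_wordsLe_take_drop n fun u v => A u * B v * monImg R X (u ++ v) w
    _ = ∑ p ∈ wordsLe n ×ˢ wordsLe n, A p.1 * B p.2 * monImg R X (p.1 ++ p.2) w := by
        refine Finset.sum_filter_of_ne fun p _ hp => ?_
        by_contra hlen
        rw [monImg_apply_eq_zero_of_length_lt hX (by rw [List.length_append]; omega),
          mul_zero] at hp
        exact hp rfl
    _ = cmul R (subst R A X) (subst R B X) w := (cmul_subst_subst_apply hX A B w).symm

lemma subst_oneS : subst R (oneS R) X = oneS R := by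
  have hone : oneS R = wordS R [] := by
    funext w
    simp [oneS, wordS]
  rw [hone, subst_wordS hX, monImg, hone]

lemma subst_monImg (Y : List (Fin 2) → R) (v : List (Fin 2)) :
    subst R (monImg R Y v) X = monImg R (subst R Y X) v := by
  induction v with
  | nil => rw [monImg, monImg, subst_oneS hX]
  | cons a v ih =>
    rw [monImg, monImg, subst_cmul hX, ih]
    congr 1
    split_ifs
    · rfl
    · rw [subst_wordS hX, monImg_singleton, if_neg (by decide)]

lemma subst_subst (H Y : List (Fin 2) → R) (hY : Y [] = 0) :
    subst R (subst R H Y) X = subst R H (subst R Y X) := by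
  funext w
  have hexpand : ∀ u ∈ wordsLe w.length, subst R H Y u * monImg R X u w =
      ∑ v ∈ wordsLe w.length, H v * (monImg R Y v u * monImg R X u w) := by
    intro u hu
    rw [subst_apply_eq_sum_wordsLe hY H (mem_wordsLe.mp hu), Finset.sum_mul]
    exact Finset.sum_congr rfl fun v _ => mul_assoc _ _ _
  rw [subst, Finset.sum_congr rfl hexpand, Finset.sum_comm, subst]
  refine Finset.sum_congr rfl fun v _ => ?_
  rw [← Finset.mul_sum, ← subst_monImg hX]
  rfl

lemma subst_conjE1 (G Gi : List (Fin 2) → R) :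
    subst R (conjE1 R G Gi) X = cmul R (cmul R (subst R G X) X) (subst R Gi X) := by
  rw [conjE1, subst_cmul hX, subst_cmul hX, subst_wordS hX, monImg_singleton, if_pos rfl]

end NoConstantTerm

lemma conjE1_nil (F Fi : List (Fin 2) → R) : conjE1 R F Fi [] = 0 := by
  simp [conjE1, cmul_nil, wordS]

lemma ihara_cmul_inv {F Fi G Gi : List (Fin 2) → R}
    (hF : cmul R F Fi = oneS R) (hG : cmul R G Gi = oneS R) :
    cmul R (ihara R F Fi G) (cmul R Fi (subst R Gi (conjE1 R F Fi))) = oneS R := by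
  have hX := conjE1_nil F Fi
  rw [ihara, cmul_assoc, ← cmul_assoc F, hF, oneS_cmul, ← subst_cmul hX, hG, subst_oneS hX]

lemma conjE1_ihara (F Fi G Gi : List (Fin 2) → R) :
    conjE1 R (ihara R F Fi G) (cmul R Fi (subst R Gi (conjE1 R F Fi))) =
      subst R (conjE1 R G Gi) (conjE1 R F Fi) := by
  rw [subst_conjE1 (conjE1_nil F Fi)]
  simp only [conjE1, ihara, cmul_assoc]

end

theorem ihara_assoc (F Fi G Gi H K Ki : List (Fin 2) → R)
    (hF : cmul R F Fi = oneS R ∧ cmul R Fi F = oneS R)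
    (hG : cmul R G Gi = oneS R ∧ cmul R Gi G = oneS R)
    (hK : K = ihara R F Fi G)
    (hKi : cmul R K Ki = oneS R ∧ cmul R Ki K = oneS R) :
    ihara R K Ki H = ihara R F Fi (ihara R G Gi H) := by
  have hX := conjE1_nil F Fi
  have hKi' : Ki = cmul R Fi (subst R Gi (conjE1 R F Fi)) :=
    cmul_left_inv_eq_right_inv hKi.2 (hK ▸ ihara_cmul_inv hF.1 hG.1)
  subst hK hKi'
  rw [ihara.eq_1 R (ihara R F Fi G), conjE1_ihara, ihara.eq_1 R F Fi (ihara R G Gi H),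
    ihara.eq_1 R G Gi H, ← subst_subst hX H _ (conjE1_nil G Gi), subst_cmul hX, ihara,
    cmul_assoc]
end

section
/- Let σ be the ring involution on R⟨⟨e0,e1⟩⟩ (R a commutative ring containing Q equipped with an involution acting on coefficients) sending e_i ↦ −e_i and acting on coefficients by the involution. Then σ commutes with the Ihara action in the sense σ(F ∘ G) = σ(F) ∘ σ(G). -/
/-!
Noncommutative formal power series `R⟨⟨e0,e1⟩⟩` are modeled as coefficient
functions on words: `List (Fin 2) → R` (letter `0` is `e0`, letter `1` is
`e1`).  `cmul` is the Cauchy (concatenation) product, `oneS` the unit series.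
-/

variable (R : Type*) [CommRing R] [Algebra ℚ R]

/-- The `R`-semilinear algebra map `σ` determined by `e_i ↦ −e_i` and a ring
involution `ι` on the coefficients: on a coefficient function it sends
`F w ↦ (−1)^{|w|} ι (F w)`. -/
def sigmaMap (ι : R →+* R) (F : List (Fin 2) → R) : List (Fin 2) → R :=
  fun w => (-1 : R) ^ w.length * ι (F w)

lemma sigma_cmul (ι : R →+* R) (F G : List (Fin 2) → R) :
    sigmaMap R ι (cmul R F G) = cmul R (sigmaMap R ι F) (sigmaMap R ι G) := by
  funext w
  simp only [sigmaMap, cmul, map_sum, map_mul, Finset.mul_sum]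
  refine Finset.sum_congr rfl fun i hi => ?_
  have hi' : i ≤ w.length := Nat.lt_succ_iff.mp (Finset.mem_range.mp hi)
  rw [List.length_take, List.length_drop, min_eq_left hi']
  have hpow : (-1 : R) ^ w.length = (-1) ^ i * (-1) ^ (w.length - i) := by
    rw [← pow_add, Nat.add_sub_cancel' hi']
  rw [hpow]; ring

lemma monImg_neg_sigma (ι : R →+* R) (X : List (Fin 2) → R) (u : List (Fin 2)) :
    ∀ w, monImg R (fun v => - sigmaMap R ι X v) u w
      = (-1 : R) ^ u.length * ((-1 : R) ^ w.length * ι (monImg R X u w)) := by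
  induction u with
  | nil =>
    intro w
    by_cases h : w = [] <;> simp [monImg, oneS, h]
  | cons a u ih =>
    intro w
    have hfac : ∀ v : List (Fin 2),
        (if a = 1 then (fun v => - sigmaMap R ι X v) else wordS R [0]) v
          = -((-1 : R) ^ v.length * ι ((if a = 1 then X else wordS R [0]) v)) := by
      intro v
      by_cases h : a = 1
      · simp [h, sigmaMap]
      · by_cases hv : v = [0] <;> simp [h, wordS, hv]
    simp only [monImg, cmul, map_sum, map_mul, Finset.mul_sum]
    refine Finset.sum_congr rfl fun i hi => ?_
    have hi' : i ≤ w.length := Nat.lt_succ_iff.mp (Finset.mem_range.mp hi)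
    rw [hfac, ih, List.length_take, List.length_drop, min_eq_left hi']
    have hpow : (-1 : R) ^ w.length = (-1) ^ i * (-1) ^ (w.length - i) := by
      rw [← pow_add, Nat.add_sub_cancel' hi']
    rw [hpow, List.length_cons]; ring

/-- `σ` commutes with the Ihara action: `σ(F ∘ G) = σ(F) ∘ σ(G)`.
(`Fi = F⁻¹`, and `σ(Fi)` is then the inverse of `σ(F)`.) -/
theorem sigma_commutes_with_ihara (ι : R →+* R) (hι : ∀ r, ι (ι r) = r)
    (F Fi G : List (Fin 2) → R)
    (hF : cmul R F Fi = oneS R ∧ cmul R Fi F = oneS R) :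
    sigmaMap R ι (ihara R F Fi G)
      = ihara R (sigmaMap R ι F) (sigmaMap R ι Fi) (sigmaMap R ι G) := by
  have hconj : conjE1 R (sigmaMap R ι F) (sigmaMap R ι Fi)
      = fun w => - sigmaMap R ι (conjE1 R F Fi) w := by
    have h1 : sigmaMap R ι (wordS R [1]) = fun w => - wordS R [1] w := by
      funext w; by_cases h : w = [1] <;> simp [sigmaMap, wordS, h]
    have h2 : ∀ A B : List (Fin 2) → R,
        cmul R A (fun v => - B v) = fun w => - cmul R A B w := by
      intro A B; funext w; simp [cmul, Finset.sum_neg_distrib]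
    have h3 : ∀ A B : List (Fin 2) → R,
        cmul R (fun v => - A v) B = fun w => - cmul R A B w := by
      intro A B; funext w; simp [cmul, Finset.sum_neg_distrib]
    rw [conjE1, conjE1, sigma_cmul, sigma_cmul, h1, h2, h3]
    funext w; ring
  have hsubst : subst R (sigmaMap R ι G)
        (fun v => - sigmaMap R ι (conjE1 R F Fi) v)
      = sigmaMap R ι (subst R G (conjE1 R F Fi)) := by
    funext w
    simp only [subst, monImg_neg_sigma]
    simp only [sigmaMap, subst]
    rw [map_sum, Finset.mul_sum]
    refine Finset.sum_congr rfl fun u hu => ?_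
    rw [map_mul]
    have h1 : (-1 : R) ^ u.length * (-1) ^ u.length = 1 := by
      rw [← pow_add]; exact Even.neg_one_pow ⟨u.length, rfl⟩
    linear_combination (ι (G u) * ((-1 : R) ^ w.length
      * ι (monImg R (conjE1 R F Fi) u w))) * h1
  rw [ihara, ihara, hconj, hsubst, ← sigma_cmul]
end
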